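/- arXiv:1003.1278 — 5 statements merged into one kernel-verified Lean document; each statement's English description precedes it below -/
import Mathlib

section
/- Let (\lambda_n)_{n \in \mathbb{Z}} be a strictly increasing sequence of reals with \lambda_{n+1} - \lambda_n \ge \pi for all n, and let (a_n) be a finitely supported sequence of complex numbers. Then for G(x) = \sum_n a_n H(x + \lambda_n), \int_{-\infty}^{\infty} |G'(x)|^2 dx = \int_{-\infty}^{\infty} |G(x)|^2 dx. -/
/-!
The translates `x ↦ f (x + λₙ)` of a function `f` supported in `(-r, r)` have pairwise disjoint
supports once the shifts are `2r`-separated, so at every point at most one term of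
`∑ aₙ f (x + λₙ)` is nonzero. Hence `∫ |∑ aₙ f (x + λₙ)|² = (∑ |aₙ|²) ∫ f²`. Both `H` and `H'` are
supported in `(-π/2, π/2)`, and `∫ cos² = ∫ sin² = π/2` over that interval.
-/

open MeasureTheory Real

noncomputable def H (x : ℝ) : ℝ := if |x| ≤ Real.pi / 2 then Real.cos x else 0

noncomputable def Hpow (M : ℕ) (x : ℝ) : ℝ :=
  if M = 0 then (if |x| ≤ Real.pi / 2 then 1 else 0) else (H x) ^ M

noncomputable def HpowDeriv (M : ℕ) (x : ℝ) : ℝ :=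
  if |x| ≤ Real.pi / 2 then -(M : ℝ) * Real.cos x ^ (M - 1) * Real.sin x else 0

noncomputable def Hderiv (x : ℝ) : ℝ := if |x| < Real.pi / 2 then -Real.sin x else 0

noncomputable def gM (M : ℕ) (l : ℝ) : ℝ := ∫ x : ℝ, Hpow M (x + l) * Hpow (M - 2) x

lemma map_sum_of_pairwise_eq_zero_or_eq_zero {ι M N : Type*} [AddCommMonoid M] [AddCommMonoid N]
    (φ : M → N) (hφ : φ 0 = 0) {s : Finset ι} {g : ι → M}
    (hg : (s : Set ι).Pairwise fun i j => g i = 0 ∨ g j = 0) :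
    φ (∑ i ∈ s, g i) = ∑ i ∈ s, φ (g i) := by
  by_cases hne : ∃ i ∈ s, g i ≠ 0
  · obtain ⟨i, hi, hgi⟩ := hne
    have hzero : ∀ j ∈ s, j ≠ i → g j = 0 := fun j hj hji =>
      (hg hj hi hji).resolve_right hgi
    rw [Finset.sum_eq_single i hzero (absurd hi),
      Finset.sum_eq_single i (fun j hj hji => by rw [hzero j hj hji, hφ]) (absurd hi)]
  · push Not at hne
    rw [Finset.sum_eq_zero hne, hφ, Finset.sum_eq_zero fun i hi => by rw [hne i hi, hφ]]

lemma le_sub_of_forall_le_sub_succ {lam : ℤ → ℝ} {d : ℝ} (hd : 0 ≤ d)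
    (hgap : ∀ n, d ≤ lam (n + 1) - lam n) {m n : ℤ} (hmn : m < n) : d ≤ lam n - lam m := by
  induction n, hmn using Int.leInduction with
  | base => exact hgap m
  | succ n _ ih => linarith [hgap n]

lemma pairwise_le_abs_sub_of_forall_le_sub_succ {lam : ℤ → ℝ} {d : ℝ} (hd : 0 ≤ d)
    (hgap : ∀ n, d ≤ lam (n + 1) - lam n) : Pairwise fun m n => d ≤ |lam m - lam n| := by
  intro m n hmn
  rcases hmn.lt_or_gt with h | h
  · rw [abs_sub_comm]
    exact (le_sub_of_forall_le_sub_succ hd hgap h).trans (le_abs_self _)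
  · exact (le_sub_of_forall_le_sub_succ hd hgap h).trans (le_abs_self _)

lemma eq_zero_or_eq_zero_of_support_subset_Ioo {α : Type*} [Zero α] {f : ℝ → α} {r c d : ℝ}
    (hf : Function.support f ⊆ Set.Ioo (-r) r) (hcd : 2 * r ≤ |c - d|) (x : ℝ) :
    f (x + c) = 0 ∨ f (x + d) = 0 := by
  by_contra! h
  obtain ⟨hc₁, hc₂⟩ := hf h.1
  obtain ⟨hd₁, hd₂⟩ := hf h.2
  have : |c - d| < 2 * r := abs_sub_lt_iff.mpr ⟨by linarith, by linarith⟩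
  linarith

lemma integral_norm_finsum_translate_sq {ι : Type*} {f : ℝ → ℝ} {r : ℝ}
    (hf : Function.support f ⊆ Set.Ioo (-r) r) (hf2 : Integrable fun x => f x ^ 2)
    {lam : ι → ℝ} (hlam : Pairwise fun m n => 2 * r ≤ |lam m - lam n|)
    {a : ι → ℂ} (ha : (Function.support a).Finite) :
    ∫ x, ‖∑ᶠ n, a n * (f (x + lam n) : ℂ)‖ ^ 2 = (∑ᶠ n, ‖a n‖ ^ 2) * ∫ x, f x ^ 2 := by
  set s := ha.toFinset
  have hpointwise (x : ℝ) : ‖∑ᶠ n, a n * (f (x + lam n) : ℂ)‖ ^ 2 =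
      ∑ n ∈ s, ‖a n‖ ^ 2 * f (x + lam n) ^ 2 := by
    rw [finsum_eq_sum_of_support_subset (s := s) _ fun n hn => by
        simpa [s] using left_ne_zero_of_mul hn,
      map_sum_of_pairwise_eq_zero_or_eq_zero (‖·‖ ^ 2) (by simp)]
    · simp [mul_pow, sq_abs]
    · intro m _ n _ hmn
      rcases eq_zero_or_eq_zero_of_support_subset_Ioo hf (hlam hmn) x with h | h <;> simp [h]
  rw [integral_congr_ae (.of_forall hpointwise),
    integral_finsetSum _ fun n _ => (hf2.comp_add_right (lam n)).const_mul _,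
    finsum_eq_sum_of_support_subset (s := s) (fun n => ‖a n‖ ^ 2) fun n hn => by simpa [s] using hn,
    Finset.sum_mul]
  refine Finset.sum_congr rfl fun n _ => ?_
  rw [integral_const_mul, integral_add_right_eq_self (fun x => f x ^ 2) (lam n)]

lemma support_H_subset : Function.support H ⊆ Set.Ioo (-(π / 2)) (π / 2) := by
  intro x hx
  rw [Set.mem_Ioo, ← abs_lt]
  rw [Function.mem_support, H] at hx
  split_ifs at hx with h
  · refine h.lt_of_ne fun heq => hx ?_
    rcases abs_eq (by positivity) |>.mp heq with rfl | rfl <;> simp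
  · exact absurd rfl hx

lemma support_Hderiv_subset : Function.support Hderiv ⊆ Set.Ioo (-(π / 2)) (π / 2) := by
  intro x hx
  rw [Set.mem_Ioo, ← abs_lt]
  rw [Function.mem_support, Hderiv] at hx
  split_ifs at hx with h
  · exact h
  · exact absurd rfl hx

lemma H_sq_eq_indicator :
    (fun x => H x ^ 2) = Set.indicator (Set.Icc (-(π / 2)) (π / 2)) (fun x => cos x ^ 2) := by
  funext x
  simp only [H, Set.indicator, Set.mem_Icc, ← abs_le]
  split_ifs <;> simp

lemma Hderiv_sq_eq_indicator :
    (fun x => Hderiv x ^ 2) = Set.indicator (Set.Ioo (-(π / 2)) (π / 2)) (fun x => sin x ^ 2) := by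
  funext x
  simp only [Hderiv, Set.indicator, Set.mem_Ioo, ← abs_lt]
  split_ifs <;> simp

lemma integrable_H_sq : Integrable fun x => H x ^ 2 := by
  rw [H_sq_eq_indicator]
  exact (continuous_cos.pow 2).integrableOn_Icc.integrable_indicator measurableSet_Icc

lemma integrable_Hderiv_sq : Integrable fun x => Hderiv x ^ 2 := by
  rw [Hderiv_sq_eq_indicator]
  exact ((continuous_sin.pow 2).integrableOn_Icc.mono_set Set.Ioo_subset_Icc_self).integrable_indicator
    measurableSet_Ioo

lemma integral_H_sq : ∫ x, H x ^ 2 = π / 2 := by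
  rw [H_sq_eq_indicator, integral_indicator measurableSet_Icc, integral_Icc_eq_integral_Ioc,
    ← intervalIntegral.integral_of_le (by linarith [pi_pos]), integral_cos_sq]
  simp

lemma integral_Hderiv_sq : ∫ x, Hderiv x ^ 2 = π / 2 := by
  rw [Hderiv_sq_eq_indicator, integral_indicator measurableSet_Ioo, ← integral_Ioc_eq_integral_Ioo,
    ← intervalIntegral.integral_of_le (by linarith [pi_pos]), integral_sin_sq]
  simp

theorem stmt5_general (lam : ℤ → ℝ)
    (hgap : ∀ n : ℤ, Real.pi ≤ lam (n + 1) - lam n)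
    (a : ℤ → ℂ) (ha : (Function.support a).Finite) :
    ∫ x : ℝ, ‖∑ᶠ n : ℤ, a n * (Hderiv (x + lam n) : ℂ)‖ ^ 2 =
      ∫ x : ℝ, ‖∑ᶠ n : ℤ, a n * (H (x + lam n) : ℂ)‖ ^ 2 := by
  have hsep : Pairwise fun m n => 2 * (π / 2) ≤ |lam m - lam n| := by
    rw [mul_div_cancel₀ π two_ne_zero]
    exact pairwise_le_abs_sub_of_forall_le_sub_succ pi_pos.le hgap
  rw [integral_norm_finsum_translate_sq support_Hderiv_subset integrable_Hderiv_sq hsep ha,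
    integral_norm_finsum_translate_sq support_H_subset integrable_H_sq hsep ha,
    integral_Hderiv_sq, integral_H_sq]

theorem stmt5 (lam : ℤ → ℝ) (hmono : StrictMono lam)
    (hgap : ∀ n : ℤ, Real.pi ≤ lam (n + 1) - lam n)
    (a : ℤ → ℂ) (ha : (Function.support a).Finite) :
    ∫ x : ℝ, ‖∑ᶠ n : ℤ, a n * (Hderiv (x + lam n) : ℂ)‖ ^ 2 =
      ∫ x : ℝ, ‖∑ᶠ n : ℤ, a n * (H (x + lam n) : ℂ)‖ ^ 2 :=
  stmt5_general lam hgap a ha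
end

section
/- For all x with 0 \le x \le \pi, 32 g_3(x) = 12(\pi - x)\cos x + 9 \sin x + \sin(3x), where g_3(\lambda) = \int_{-\infty}^{\infty} H^3(x+\lambda) H(x) dx. -/
open MeasureTheory Real

/-! For `0 ≤ λ ≤ π` the supports of `H(· + λ)` and `H` overlap in `[-π/2, π/2 - λ]`, where both
factors are cosines, so `g₃(λ)` is the integral of `cos³(y + λ) cos y` over that interval. Linearising
this product into a sum of cosines gives an explicit antiderivative, and evaluating it at the
endpoints yields the formula. -/

open Set

lemma Hpow_of_ne_zero {M : ℕ} (hM : M ≠ 0) (x : ℝ) : Hpow M x = H x ^ M := if_neg hM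

lemma H_of_abs_le {x : ℝ} (hx : |x| ≤ π / 2) : H x = cos x := if_pos hx

lemma H_of_pi_div_two_lt_abs {x : ℝ} (hx : π / 2 < |x|) : H x = 0 := if_neg hx.not_ge

lemma H_add_pow_mul_H_pow_eq_indicator {m n : ℕ} (hm : m ≠ 0) (hn : n ≠ 0) {l : ℝ} (hl : 0 ≤ l)
    (y : ℝ) :
    H (y + l) ^ m * H y ^ n =
      (Icc (-(π / 2)) (π / 2 - l)).indicator (fun y => cos (y + l) ^ m * cos y ^ n) y := by
  by_cases hy : y ∈ Icc (-(π / 2)) (π / 2 - l)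
  · obtain ⟨hy₀, hy₁⟩ := id hy
    rw [indicator_of_mem hy, H_of_abs_le (abs_le.2 ⟨by linarith, by linarith⟩),
      H_of_abs_le (abs_le.2 ⟨by linarith, by linarith⟩)]
  · rw [indicator_of_notMem hy]
    rcases not_and_or.1 hy with hy₀ | hy₁
    · rw [H_of_pi_div_two_lt_abs (x := y) (lt_abs.2 (Or.inr (by linarith))), zero_pow hn,
        mul_zero]
    · rw [H_of_pi_div_two_lt_abs (x := y + l) (lt_abs.2 (Or.inl (by linarith))), zero_pow hm,
        zero_mul]

lemma gM_eq_intervalIntegral {M : ℕ} (hM : 3 ≤ M) {l : ℝ} (hl₀ : 0 ≤ l) (hlπ : l ≤ π) :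
    gM M l = ∫ y in -(π / 2)..π / 2 - l, cos (y + l) ^ M * cos y ^ (M - 2) := by
  simp only [gM, Hpow_of_ne_zero (show M ≠ 0 by omega), Hpow_of_ne_zero (show M - 2 ≠ 0 by omega),
    H_add_pow_mul_H_pow_eq_indicator (show M ≠ 0 by omega) (show M - 2 ≠ 0 by omega) hl₀]
  rw [integral_indicator measurableSet_Icc, integral_Icc_eq_integral_Ioc,
    intervalIntegral.integral_of_le (by linarith)]

lemma cos_add_pow_three_mul_cos (a b : ℝ) :
    cos (b + a) ^ 3 * cos b = 3 / 8 * cos (2 * b + a) + 3 / 8 * cos a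
      + 1 / 8 * cos (4 * b + 3 * a) + 1 / 8 * cos (2 * b + 3 * a) := by
  have cos_mul_cos (u v : ℝ) : cos u * cos v = (cos (u + v) + cos (u - v)) / 2 := by
    rw [cos_add, cos_sub]; ring
  calc cos (b + a) ^ 3 * cos b
      = (cos (3 * (b + a)) * cos b + 3 * (cos (b + a) * cos b)) / 4 := by
        rw [cos_three_mul]; ring
    _ = _ := by
        rw [cos_mul_cos, cos_mul_cos, show 3 * (b + a) + b = 4 * b + 3 * a by ring,
          show 3 * (b + a) - b = 2 * b + 3 * a by ring, show b + a + b = 2 * b + a by ring,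
          show b + a - b = a by ring]
        ring

lemma hasDerivAt_antideriv_cos_add_pow_three_mul_cos (a y : ℝ) :
    HasDerivAt (fun y => 3 / 16 * sin (2 * y + a) + 3 / 8 * cos a * y
      + 1 / 32 * sin (4 * y + 3 * a) + 1 / 16 * sin (2 * y + 3 * a))
      (cos (y + a) ^ 3 * cos y) y := by
  have affine (c d : ℝ) : HasDerivAt (fun y => c * y + d) c y := by
    simpa using ((hasDerivAt_id y).const_mul c).add_const d
  have := ((((affine 2 a).sin.const_mul (3 / 16)).add ((hasDerivAt_id y).const_mul
    (3 / 8 * cos a))).add ((affine 4 (3 * a)).sin.const_mul (1 / 32))).add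
    ((affine 2 (3 * a)).sin.const_mul (1 / 16))
  refine this.congr_deriv ?_
  rw [cos_add_pow_three_mul_cos]
  ring

lemma integral_cos_add_pow_three_mul_cos (a : ℝ) :
    ∫ y in -(π / 2)..π / 2 - a, cos (y + a) ^ 3 * cos y =
      (12 * (π - a) * cos a + 9 * sin a + sin (3 * a)) / 32 := by
  rw [intervalIntegral.integral_eq_sub_of_hasDerivAt
    (fun y _ => hasDerivAt_antideriv_cos_add_pow_three_mul_cos a y)
    (Continuous.intervalIntegrable (by fun_prop) _ _)]
  rw [show 2 * (π / 2 - a) + a = π - a by ring, show 4 * (π / 2 - a) + 3 * a = 2 * π - a by ring,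
    show 2 * (π / 2 - a) + 3 * a = a + π by ring, show 2 * -(π / 2) + a = a - π by ring,
    show 4 * -(π / 2) + 3 * a = 3 * a - 2 * π by ring,
    show 2 * -(π / 2) + 3 * a = 3 * a - π by ring]
  simp only [sin_pi_sub, sin_sub_pi, sin_add_pi, sin_two_pi_sub, sin_sub_two_pi]
  ring

theorem stmt9 (x : ℝ) (hx : x ∈ Set.Icc 0 Real.pi) :
    32 * gM 3 x = 12 * (Real.pi - x) * Real.cos x + 9 * Real.sin x + Real.sin (3 * x) := by
  rw [gM_eq_intervalIntegral le_rfl hx.1 hx.2, show 3 - 2 = 1 from rfl]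
  simp only [pow_one]
  rw [integral_cos_add_pow_three_mul_cos]
  ring
end

section
/- Let g : \mathbb{R} \to \mathbb{R} be an even function, (\lambda_n)_{n \in \mathbb{Z}} a strictly increasing sequence of reals such that g(\lambda_m - \lambda_n) = 0 whenever |m - n| \ge 2, and (a_n) a finitely supported sequence of complex numbers. Then \sum_{m,n} g(\lambda_m - \lambda_n) a_m \overline{a_n} = \sum_n g(\lambda_{n+1} - \lambda_n) |a_n + a_{n+1}|^2 + \sum_n (g(0) - g(\lambda_n - \lambda_{n-1}) - g(\lambda_{n+1} - \lambda_n)) |a_n|^2. -/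
open MeasureTheory Real

/-!
The matrix `(g (λ_m - λ_n))` is symmetric (as `g` is even) and tridiagonal, so the quadratic form
reduces to `∑ a_m (t_{m-1} ā_{m-1} + g 0 ā_m + t_m ā_{m+1})` with `t_n = g (λ_{n+1} - λ_n)`.
Expanding `t_n |a_n + a_{n+1}|²` and comparing, the two sides differ pointwise by
`u n - u (n + 1)` with `u n = t_{n-1} a_n (ā_{n-1} + ā_n)`, which sums to zero.
-/

open Function

theorem finsum_sub_comp_add_one_eq_zero {M : Type*} [AddCommGroup M] {u : ℤ → M}
    (hu : u.HasFiniteSupport) : ∑ᶠ n, (u n - u (n + 1)) = 0 := by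
  have hu' : (fun n => u (n + 1)).HasFiniteSupport := by
    fun_prop (disch := exact add_left_injective 1)
  rw [finsum_sub_distrib hu hu', ← finsum_comp_equiv (Equiv.addRight 1) (f := u)]
  exact sub_self _

theorem finsum_eq_pred_add_self_add_succ {M : Type*} [AddCommMonoid M] (f : ℤ → M) (m : ℤ)
    (hf : ∀ n, 2 ≤ |m - n| → f n = 0) : ∑ᶠ n, f n = f (m - 1) + f m + f (m + 1) := by
  have hsupp : support f ⊆ ↑({m - 1, m, m + 1} : Finset ℤ) := by
    intro n hn
    by_contra hfar
    simp only [Finset.coe_insert, Finset.coe_singleton, Set.mem_insert_iff,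
      Set.mem_singleton_iff, not_or] at hfar
    exact hn (hf n (by rcases abs_cases (m - n) with ⟨h, _⟩ | ⟨h, _⟩ <;> omega))
  rw [finsum_eq_sum_of_support_subset f hsupp, Finset.sum_insert (by simp; omega),
    Finset.sum_pair (by omega), add_assoc]

theorem finsum_jacobi_form_eq {R : Type*} [CommRing R] (t d a b : ℤ → R)
    (ha : a.HasFiniteSupport) :
    ∑ᶠ m, a m * (t (m - 1) * b (m - 1) + d m * b m + t m * b (m + 1)) =
      (∑ᶠ n, t n * ((a n + a (n + 1)) * (b n + b (n + 1)))) +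
        ∑ᶠ n, (d n - t (n - 1) - t n) * (a n * b n) := by
  have hshift : Injective (· + 1 : ℤ → ℤ) := add_left_injective 1
  set u : ℤ → R := fun n => t (n - 1) * a n * (b (n - 1) + b n)
  have hpointwise : ∀ m, a m * (t (m - 1) * b (m - 1) + d m * b m + t m * b (m + 1)) =
      (t m * ((a m + a (m + 1)) * (b m + b (m + 1))) + (d m - t (m - 1) - t m) * (a m * b m)) +
        (u m - u (m + 1)) := by
    intro m
    simp only [u, add_sub_cancel_right]
    ring
  rw [finsum_congr hpointwise,
    finsum_add_distrib (by fun_prop (disch := exact hshift)) (by fun_prop (disch := exact hshift)),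
    finsum_sub_comp_add_one_eq_zero (by fun_prop), add_zero,
    finsum_add_distrib (by fun_prop (disch := exact hshift)) (by fun_prop)]

theorem stmt12_general (g : ℝ → ℝ) (heven : ∀ x, g (-x) = g x)
    (lam : ℤ → ℝ)
    (hzero : ∀ m n : ℤ, 2 ≤ |m - n| → g (lam m - lam n) = 0)
    (a : ℤ → ℂ) (ha : (Function.support a).Finite) :
    ∑ᶠ m : ℤ, ∑ᶠ n : ℤ, (g (lam m - lam n) : ℂ) * (a m * starRingEnd ℂ (a n)) =
      (∑ᶠ n : ℤ, (g (lam (n + 1) - lam n) : ℂ) * (‖a n + a (n + 1)‖ ^ 2 : ℝ)) +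
      ∑ᶠ n : ℤ, ((g 0 - g (lam n - lam (n - 1)) - g (lam (n + 1) - lam n) : ℝ) : ℂ)
        * (‖a n‖ ^ 2 : ℝ) := by
  set t : ℤ → ℂ := fun n => (g (lam (n + 1) - lam n) : ℂ)
  have hinner : ∀ m, ∑ᶠ n, (g (lam m - lam n) : ℂ) * (a m * starRingEnd ℂ (a n)) =
      a m * (t (m - 1) * starRingEnd ℂ (a (m - 1)) + g 0 * starRingEnd ℂ (a m)
        + t m * starRingEnd ℂ (a (m + 1))) := by
    intro m
    have hsymm : g (lam m - lam (m + 1)) = g (lam (m + 1) - lam m) := by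
      rw [← heven, neg_sub]
    rw [finsum_eq_pred_add_self_add_succ _ m fun n hn => by simp [hzero m n hn]]
    simp only [t, sub_add_cancel, sub_self, hsymm]
    ring
  rw [finsum_congr hinner,
    finsum_jacobi_form_eq t (fun _ => (g 0 : ℂ)) a (fun n => starRingEnd ℂ (a n)) ha]
  congr 1 <;> refine finsum_congr fun n => ?_
  · rw [← map_add, Complex.mul_conj', Complex.ofReal_pow]
  · rw [Complex.mul_conj', Complex.ofReal_pow]
    simp only [t, sub_add_cancel, Complex.ofReal_sub]

theorem stmt12 (g : ℝ → ℝ) (heven : ∀ x, g (-x) = g x)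
    (lam : ℤ → ℝ) (hmono : StrictMono lam)
    (hzero : ∀ m n : ℤ, 2 ≤ |m - n| → g (lam m - lam n) = 0)
    (a : ℤ → ℂ) (ha : (Function.support a).Finite) :
    ∑ᶠ m : ℤ, ∑ᶠ n : ℤ, (g (lam m - lam n) : ℂ) * (a m * starRingEnd ℂ (a n)) =
      (∑ᶠ n : ℤ, (g (lam (n + 1) - lam n) : ℂ) * (‖a n + a (n + 1)‖ ^ 2 : ℝ)) +
      ∑ᶠ n : ℤ, ((g 0 - g (lam n - lam (n - 1)) - g (lam (n + 1) - lam n) : ℝ) : ℂ)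
        * (‖a n‖ ^ 2 : ℝ) :=
  stmt12_general g heven lam hzero a ha
end

section
/- If a \ge 0, b \ge 0 and a + b \ge \pi, then g_2(a) + g_2(b) \le g_2(0), where g_2(\lambda) = \int_{-\infty}^{\infty} H^2(x + \lambda) H^0(x) dx. -/
open MeasureTheory Real

/-! For `0 ≤ l` the integrand of `gM 2 l` is `cos (x + l) ^ 2` on `[-π/2, π/2 - l]` and zero
elsewhere, so `gM 2 l = (π - l + sin l cos l) / 2` for `l ∈ [0, π]` and `gM 2 l = 0` for `l ≥ π`.
Replacing `a`, `b` by `min a π`, `min b π` changes neither side, and then the claim becomes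
`sin a cos a + sin b cos b ≤ a + b - π`. The left side equals `-sin (a + b - π) cos (a - b)`, which
is at most `|sin (a + b - π)| ≤ a + b - π`. -/

lemma sin_mul_cos_add_sin_mul_cos_le {a b : ℝ} (hab : π ≤ a + b) :
    sin a * cos a + sin b * cos b ≤ a + b - π := by
  have hprod : sin a * cos a + sin b * cos b = -(sin (a + b - π) * cos (a - b)) := by
    rw [sin_sub_pi, sin_add, cos_sub]
    linear_combination (-(sin a * cos a)) * sin_sq_add_cos_sq b -
      (sin b * cos b) * sin_sq_add_cos_sq a
  calc sin a * cos a + sin b * cos b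
      ≤ |sin (a + b - π) * cos (a - b)| := hprod ▸ neg_le_abs _
    _ ≤ |sin (a + b - π)| := by
        rw [abs_mul]
        exact mul_le_of_le_one_right (abs_nonneg _) (abs_cos_le_one _)
    _ ≤ |a + b - π| := abs_sin_le_abs
    _ = a + b - π := abs_of_nonneg (by linarith)

lemma Hpow_two_add_mul_Hpow_zero {l : ℝ} (hl : 0 ≤ l) :
    (fun x => Hpow 2 (x + l) * Hpow 0 x) =
      (Set.Icc (-(π / 2)) (π / 2 - l)).indicator (fun x => cos (x + l) ^ 2) := by
  funext x
  simp only [Hpow, if_neg two_ne_zero, H, Set.indicator_apply, Set.mem_Icc, abs_le]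
  split_ifs <;> grind

lemma gM_two_eq_setIntegral {l : ℝ} (hl : 0 ≤ l) :
    gM 2 l = ∫ x in Set.Ioc (-(π / 2)) (π / 2 - l), cos (x + l) ^ 2 := by
  rw [gM, Hpow_two_add_mul_Hpow_zero hl, integral_indicator measurableSet_Icc,
    integral_Icc_eq_integral_Ioc]

lemma gM_two_eq_zero_of_pi_le {l : ℝ} (hl : π ≤ l) : gM 2 l = 0 := by
  rw [gM_two_eq_setIntegral (pi_pos.le.trans hl), Set.Ioc_eq_empty (by linarith),
    Measure.restrict_empty, integral_zero_measure]

lemma gM_two_eq {l : ℝ} (h0 : 0 ≤ l) (h1 : l ≤ π) :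
    gM 2 l = (π - l + sin l * cos l) / 2 := by
  rw [gM_two_eq_setIntegral h0, ← intervalIntegral.integral_of_le (by linarith),
    intervalIntegral.integral_comp_add_right (fun x => cos x ^ 2), integral_cos_sq,
    show -(π / 2) + l = -(π / 2 - l) by ring, sub_add_cancel, sin_neg, cos_neg,
    sin_pi_div_two_sub, cos_pi_div_two_sub, sin_pi_div_two, cos_pi_div_two]
  ring

lemma gM_two_eq_min_pi (l : ℝ) : gM 2 l = gM 2 (min l π) := by
  rcases le_total l π with h | h
  · rw [min_eq_left h]
  · rw [min_eq_right h, gM_two_eq_zero_of_pi_le h, gM_two_eq_zero_of_pi_le le_rfl]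

theorem stmt13 (a b : ℝ) (ha : 0 ≤ a) (hb : 0 ≤ b) (hab : Real.pi ≤ a + b) :
    gM 2 a + gM 2 b ≤ gM 2 0 := by
  have hmin : π ≤ min a π + min b π := by
    rcases min_cases a π with h | h <;> rcases min_cases b π with h' | h' <;> linarith [pi_pos]
  have key := sin_mul_cos_add_sin_mul_cos_le hmin
  rw [gM_two_eq_min_pi a, gM_two_eq_min_pi b, gM_two_eq (le_min ha pi_pos.le) (min_le_right _ _),
    gM_two_eq (le_min hb pi_pos.le) (min_le_right _ _), gM_two_eq le_rfl pi_pos.le]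
  simp only [sin_zero, zero_mul, sub_zero, add_zero]
  linarith
end

section
/- Let (\lambda_n)_{n \in \mathbb{Z}} be a strictly increasing sequence of reals with \lambda_{n+2} - \lambda_n \ge \pi for all n, (a_n) a finitely supported sequence of complex numbers, and G(x) = \sum_n a_n H^2(x + \lambda_n). Then \int_{-\infty}^{\infty} |G'(x)|^2 dx \le 4 \int_{-\infty}^{\infty} |G(x)|^2 dx. -/
open MeasureTheory Real

/-
Expanding the squares turns both integrals into quadratic forms in `a` whose coefficients are
autocorrelations `∫ f (x + t) * f x` of `H²` and of `(H²)'` at `t = λ_m - λ_n`. Hence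
`4 ∫ |G|² - ∫ |G'|²` is the form with kernel `K(t) = π - |t| + sin (2|t|) / 2` for `|t| ≤ π`
and `K(t) = 0` beyond. `K ≥ 0` is decreasing in `|t|`, `K(0) = π`, and `K(d) + K(d') ≤ π`
whenever `d + d' ≥ π` (from `K(π - d) = π - K(d)`). The gap condition leaves only the
neighbours `m ± 1` in row `m`, and their two entries add up to at most `K(0)`: the matrix is
diagonally dominant, hence positive semidefinite.
-/

open Function Set
open scoped InnerProductSpace

section QuadraticForm

variable {ι E : Type*} [DecidableEq ι] [NormedAddCommGroup E] [InnerProductSpace ℝ E]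

theorem sum_sum_inner_mul_nonneg_of_diagDominant (s : Finset ι) (K : ι → ι → ℝ)
    (hsymm : ∀ m n, K m n = K n m) (hnonneg : ∀ m n, 0 ≤ K m n)
    (hdom : ∀ m ∈ s, ∑ n ∈ s.erase m, K m n ≤ K m m) (b : ι → E) :
    0 ≤ ∑ m ∈ s, ∑ n ∈ s, ⟪b m, b n⟫_ℝ * K m n := by
  -- polarize: the `‖b m + b n‖²` part is at least its diagonal, the `‖b m‖²` parts are row sums
  have hpolar : ∀ m n, ⟪b m, b n⟫_ℝ * K m n
      = ‖b m + b n‖ ^ 2 / 2 * K m n - ‖b m‖ ^ 2 / 2 * K m n - ‖b n‖ ^ 2 / 2 * K n m := by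
    intro m n
    rw [norm_add_sq_real, hsymm n m]
    ring
  have hsplit : ∑ m ∈ s, ∑ n ∈ s, ⟪b m, b n⟫_ℝ * K m n
      = ∑ m ∈ s, ∑ n ∈ s, ‖b m + b n‖ ^ 2 / 2 * K m n - ∑ m ∈ s, ‖b m‖ ^ 2 * ∑ n ∈ s, K m n := by
    simp only [hpolar, Finset.sum_sub_distrib, ← Finset.mul_sum]
    rw [Finset.sum_comm (f := fun m n => ‖b n‖ ^ 2 / 2 * K n m)]
    simp only [← Finset.mul_sum, ← Finset.sum_sub_distrib]
    congr 1; ext m; ring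
  have hdiag : ∀ m ∈ s, 2 * ‖b m‖ ^ 2 * K m m ≤ ∑ n ∈ s, ‖b m + b n‖ ^ 2 / 2 * K m n := by
    intro m hm
    have h := Finset.single_le_sum (f := fun n => ‖b m + b n‖ ^ 2 / 2 * K m n)
      (fun n _ => by have := hnonneg m n; positivity) hm
    rw [← two_smul ℝ (b m), norm_smul, Real.norm_two] at h
    linarith
  have hrow : ∀ m ∈ s, ‖b m‖ ^ 2 * ∑ n ∈ s, K m n ≤ 2 * ‖b m‖ ^ 2 * K m m := by
    intro m hm
    rw [← Finset.add_sum_erase s _ hm]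
    nlinarith [hdom m hm, sq_nonneg ‖b m‖]
  linarith [Finset.sum_le_sum hdiag, Finset.sum_le_sum hrow]

end QuadraticForm

theorem finsum_mul_ofReal_eq_sum_smul {ι : Type*} {a : ι → ℂ} (ha : (support a).Finite)
    (c : ι → ℝ) : ∑ᶠ n, a n * (c n : ℂ) = ∑ n ∈ ha.toFinset, c n • a n := by
  rw [finsum_eq_sum_of_support_subset _ fun n hn => ha.mem_toFinset.mpr (left_ne_zero_of_mul hn)]
  simp only [Complex.real_smul, mul_comm]

section Autocorrelation

noncomputable def autocorr (f : ℝ → ℝ) (t : ℝ) : ℝ := ∫ x, f (x + t) * f x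

theorem integral_comp_add_mul_comp_add (f g : ℝ → ℝ) (c d : ℝ) :
    ∫ x, f (x + c) * g (x + d) = ∫ x, f (x + (c - d)) * g x := by
  rw [← integral_add_right_eq_self (fun x => f (x + (c - d)) * g x) d]
  simp only [add_assoc, add_sub_cancel]

theorem autocorr_neg (f : ℝ → ℝ) (t : ℝ) : autocorr f (-t) = autocorr f t := by
  simp only [autocorr]
  rw [← zero_sub, ← integral_comp_add_mul_comp_add, ← sub_zero t,
    ← integral_comp_add_mul_comp_add]
  simp only [add_zero, sub_zero, mul_comm]

theorem integral_norm_sq_sum_smul_comp_add {ι E : Type*} [NormedAddCommGroup E]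
    [InnerProductSpace ℝ E] {f : ℝ → ℝ} (hf : Continuous f) (hcf : HasCompactSupport f)
    (s : Finset ι) (lam : ι → ℝ) (b : ι → E) :
    ∫ x, ‖∑ n ∈ s, f (x + lam n) • b n‖ ^ 2
      = ∑ m ∈ s, ∑ n ∈ s, ⟪b m, b n⟫_ℝ * autocorr f (lam m - lam n) := by
  have hint : ∀ m n, Integrable fun x => ⟪b m, b n⟫_ℝ * (f (x + lam m) * f (x + lam n)) := by
    intro m n
    refine (Continuous.integrable_of_hasCompactSupport (by fun_prop) ?_).const_mul _
    exact (hcf.comp_homeomorph (Homeomorph.addRight (lam m))).mul_right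
  have hexpand : ∀ x, ‖∑ n ∈ s, f (x + lam n) • b n‖ ^ 2
      = ∑ m ∈ s, ∑ n ∈ s, ⟪b m, b n⟫_ℝ * (f (x + lam m) * f (x + lam n)) := by
    intro x
    rw [← real_inner_self_eq_norm_sq, sum_inner]
    refine Finset.sum_congr rfl fun m _ => ?_
    rw [inner_sum]
    refine Finset.sum_congr rfl fun n _ => ?_
    rw [real_inner_smul_left, real_inner_smul_right]
    ring
  simp only [hexpand]
  rw [integral_finsetSum _ fun m _ => integrable_finsetSum _ fun n _ => hint m n]
  refine Finset.sum_congr rfl fun m _ => ?_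
  rw [integral_finsetSum _ fun n _ => hint m n]
  refine Finset.sum_congr rfl fun n _ => ?_
  rw [integral_const_mul, autocorr, integral_comp_add_mul_comp_add]

variable {f : ℝ → ℝ} {r : ℝ}

theorem support_comp_add_mul_subset (hf : support f ⊆ Ioo (-r) r) (t : ℝ) :
    support (fun x => f (x + t) * f x) ⊆ Ioo (-r) (r - t) := by
  intro x hx
  have h1 := hf (left_ne_zero_of_mul hx)
  have h2 := hf (right_ne_zero_of_mul hx)
  simp only [mem_Ioo] at h1 h2 ⊢
  constructor <;> linarith

theorem autocorr_eq_intervalIntegral (hf : support f ⊆ Ioo (-r) r) (t : ℝ) :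
    autocorr f t = ∫ x in -r..r - t, f (x + t) * f x :=
  (intervalIntegral.integral_eq_integral_of_support_subset
    ((support_comp_add_mul_subset hf t).trans Ioo_subset_Ioc_self)).symm

theorem autocorr_eq_zero (hf : support f ⊆ Ioo (-r) r) {t : ℝ} (ht : 2 * r ≤ t) :
    autocorr f t = 0 := by
  have h := support_comp_add_mul_subset hf t
  rw [Ioo_eq_empty (by linarith), subset_empty_iff, support_eq_empty_iff] at h
  simp [autocorr, h]

end Autocorrelation

section Bump

variable {g : ℝ → ℝ} {r : ℝ}

theorem continuous_ite_abs_le (hg : Continuous g) (hgr : ∀ x, |x| = r → g x = 0) :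
    Continuous fun x => if |x| ≤ r then g x else 0 :=
  hg.if_le continuous_const continuous_abs continuous_const hgr

theorem support_ite_abs_le_subset (hgr : ∀ x, |x| = r → g x = 0) :
    support (fun x => if |x| ≤ r then g x else 0) ⊆ Ioo (-r) r := by
  intro x hx
  by_cases hle : |x| ≤ r
  · have hne : |x| ≠ r := fun h => by simp [hle, hgr x h] at hx
    exact abs_lt.mp (lt_of_le_of_ne hle hne)
  · simp [hle] at hx

theorem hasCompactSupport_of_support_subset_Ioo {f : ℝ → ℝ} (hf : support f ⊆ Ioo (-r) r) :
    HasCompactSupport f :=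
  HasCompactSupport.intro isCompact_Icc fun _ hx =>
    notMem_support.mp fun h => hx (Ioo_subset_Icc_self (hf h))

end Bump

theorem cos_eq_zero_of_abs_eq_pi_div_two {x : ℝ} (hx : |x| = π / 2) : cos x = 0 := by
  rw [← cos_abs, hx, cos_pi_div_two]

theorem hpow_two_eq : Hpow 2 = fun x => if |x| ≤ π / 2 then cos x ^ 2 else 0 := by
  ext x
  simp only [Hpow, H, two_ne_zero, if_false, ite_pow]
  norm_num

theorem continuous_hpow_two : Continuous (Hpow 2) := by
  rw [hpow_two_eq]
  exact continuous_ite_abs_le (by fun_prop) fun x hx => by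
    simp [cos_eq_zero_of_abs_eq_pi_div_two hx]

theorem support_hpow_two_subset : support (Hpow 2) ⊆ Ioo (-(π / 2)) (π / 2) := by
  rw [hpow_two_eq]
  exact support_ite_abs_le_subset fun x hx => by simp [cos_eq_zero_of_abs_eq_pi_div_two hx]

theorem continuous_hpowDeriv_two : Continuous (HpowDeriv 2) :=
  continuous_ite_abs_le (by fun_prop) fun x hx => by
    simp [cos_eq_zero_of_abs_eq_pi_div_two hx]

theorem support_hpowDeriv_two_subset : support (HpowDeriv 2) ⊆ Ioo (-(π / 2)) (π / 2) :=
  support_ite_abs_le_subset fun x hx => by simp [cos_eq_zero_of_abs_eq_pi_div_two hx]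

noncomputable def corrKernel (t : ℝ) : ℝ := 4 * autocorr (Hpow 2) t - autocorr (HpowDeriv 2) t

noncomputable def corrProfile (t : ℝ) : ℝ := π - t + sin (2 * t) / 2

theorem corrKernel_neg (t : ℝ) : corrKernel (-t) = corrKernel t := by
  simp only [corrKernel, autocorr_neg]

theorem four_mul_hpow_two_mul_sub_hpowDeriv_two_mul {x y : ℝ} (hx : |x| ≤ π / 2)
    (hy : |y| ≤ π / 2) :
    4 * (Hpow 2 y * Hpow 2 x) - HpowDeriv 2 y * HpowDeriv 2 x
      = 1 + cos (2 * y) + cos (2 * x) + cos (2 * y + 2 * x) := by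
  rw [hpow_two_eq]
  simp only [HpowDeriv, if_pos hx, if_pos hy]
  rw [cos_add, cos_two_mul y, cos_two_mul x, sin_two_mul y, sin_two_mul x]
  push_cast
  ring

theorem corrKernel_eq_corrProfile {t : ℝ} (ht0 : 0 ≤ t) (htπ : t ≤ π) :
    corrKernel t = corrProfile t := by
  have hint : ∀ f : ℝ → ℝ, Continuous f →
      IntervalIntegrable (fun x => f (x + t) * f x) volume (-(π / 2)) (π / 2 - t) :=
    fun f hf => (by fun_prop : Continuous fun x => f (x + t) * f x).intervalIntegrable _ _
  rw [corrKernel, autocorr_eq_intervalIntegral support_hpow_two_subset,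
    autocorr_eq_intervalIntegral support_hpowDeriv_two_subset,
    ← intervalIntegral.integral_const_mul,
    ← intervalIntegral.integral_sub ((hint _ continuous_hpow_two).const_mul 4)
      (hint _ continuous_hpowDeriv_two)]
  have hintegrand : ∀ x ∈ uIcc (-(π / 2)) (π / 2 - t),
      4 * (Hpow 2 (x + t) * Hpow 2 x) - HpowDeriv 2 (x + t) * HpowDeriv 2 x
        = 1 + cos (2 * (x + t)) + cos (2 * x) + cos (2 * (x + t) + 2 * x) := by
    intro x hx
    rw [uIcc_of_le (by linarith)] at hx
    exact four_mul_hpow_two_mul_sub_hpowDeriv_two_mul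
      (abs_le.mpr ⟨hx.1, by linarith [hx.2]⟩) (abs_le.mpr ⟨by linarith [hx.1], by linarith [hx.2]⟩)
  have hderiv : ∀ x ∈ uIcc (-(π / 2)) (π / 2 - t),
      HasDerivAt
        (fun x => x + sin (2 * (x + t)) / 2 + sin (2 * x) / 2 + sin (2 * (x + t) + 2 * x) / 4)
        (1 + cos (2 * (x + t)) + cos (2 * x) + cos (2 * (x + t) + 2 * x)) x := by
    intro x _
    have hxt := ((hasDerivAt_id' x).add_const t).const_mul 2
    have hx := (hasDerivAt_id' x).const_mul 2
    exact ((((hasDerivAt_id' x).add (hxt.sin.div_const 2)).add (hx.sin.div_const 2)).add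
      ((hxt.add hx).sin.div_const 4)).congr_deriv (by simp only [Pi.add_apply]; ring)
  rw [intervalIntegral.integral_congr hintegrand,
    intervalIntegral.integral_eq_sub_of_hasDerivAt hderiv
      ((by fun_prop : Continuous fun x =>
        1 + cos (2 * (x + t)) + cos (2 * x) + cos (2 * (x + t) + 2 * x)).intervalIntegrable _ _)]
  rw [show 2 * (π / 2 - t + t) = π by ring, show 2 * (π / 2 - t) = π - 2 * t by ring,
    show π + (π - 2 * t) = 2 * π - 2 * t by ring,
    show 2 * (-(π / 2) + t) = 2 * t - π by ring, show 2 * -(π / 2) = -π by ring,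
    show 2 * t - π + -π = 2 * t - 2 * π by ring,
    sin_pi, sin_pi_sub, sin_two_pi_sub, sin_sub_pi, sin_neg, sin_pi, sin_sub_two_pi, corrProfile]
  ring

theorem corrProfile_antitone : Antitone corrProfile := by
  intro x y hxy
  have h := (abs_le.mp (abs_sin_sub_sin_le (2 * y) (2 * x))).2
  rw [abs_of_nonneg (by linarith)] at h
  simp only [corrProfile]
  linarith

theorem corrProfile_pi : corrProfile π = 0 := by
  simp [corrProfile]

theorem corrProfile_pi_sub (t : ℝ) : corrProfile (π - t) = π - corrProfile t := by
  simp only [corrProfile, mul_sub, sin_two_pi_sub]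
  ring

theorem corrKernel_abs (t : ℝ) : corrKernel |t| = corrKernel t := by
  rcases abs_choice t with h | h <;> rw [h]
  exact corrKernel_neg t

theorem corrKernel_eq (t : ℝ) : corrKernel t = corrProfile (min |t| π) := by
  rw [← corrKernel_abs]
  rcases le_total |t| π with h | h
  · rw [min_eq_left h, corrKernel_eq_corrProfile (abs_nonneg t) h]
  · have hr : 2 * (π / 2) ≤ |t| := by linarith
    rw [min_eq_right h, corrProfile_pi, corrKernel,
      autocorr_eq_zero support_hpow_two_subset hr,
      autocorr_eq_zero support_hpowDeriv_two_subset hr]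
    ring

theorem corrKernel_nonneg (t : ℝ) : 0 ≤ corrKernel t := by
  rw [corrKernel_eq, ← corrProfile_pi]
  exact corrProfile_antitone (min_le_right _ _)

theorem corrKernel_zero : corrKernel 0 = π := by
  simp [corrKernel_eq, pi_pos.le, corrProfile]

theorem corrKernel_eq_zero {t : ℝ} (ht : π ≤ |t|) : corrKernel t = 0 := by
  rw [corrKernel_eq, min_eq_right ht, corrProfile_pi]

theorem corrKernel_add_le {d d' : ℝ} (hd : 0 ≤ d) (hd' : 0 ≤ d') (h : π ≤ d + d') :
    corrKernel d + corrKernel d' ≤ π := by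
  rw [corrKernel_eq, corrKernel_eq, abs_of_nonneg hd, abs_of_nonneg hd']
  have hmin : π - min d π ≤ min d' π :=
    le_min (by rcases min_cases d π with ⟨h1, _⟩ | ⟨h1, _⟩ <;> linarith)
      (by linarith [le_min hd pi_pos.le])
  have hanti := corrProfile_antitone hmin
  rw [corrProfile_pi_sub] at hanti
  linarith

theorem sum_erase_corrKernel_le {lam : ℤ → ℝ} (hmono : StrictMono lam)
    (hgap : ∀ n : ℤ, π ≤ lam (n + 2) - lam n) (s : Finset ℤ) (m : ℤ) :
    ∑ n ∈ s.erase m, corrKernel (lam m - lam n) ≤ π := by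
  have hfar : ∀ n, n ≠ m → n ∉ ({m - 1, m + 1} : Finset ℤ) → corrKernel (lam m - lam n) = 0 := by
    intro n hnm hn
    simp only [Finset.mem_insert, Finset.mem_singleton, not_or] at hn
    apply corrKernel_eq_zero
    rcases lt_or_gt_of_ne hnm with h | h
    · have hle := hmono.monotone (show n ≤ m - 2 by omega)
      have hg := hgap (m - 2)
      rw [sub_add_cancel] at hg
      exact le_abs.mpr (Or.inl (by linarith))
    · have hle := hmono.monotone (show m + 2 ≤ n by omega)
      have hg := hgap m
      exact le_abs.mpr (Or.inr (by linarith))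
  have hneighbours : corrKernel (lam m - lam (m - 1)) + corrKernel (lam m - lam (m + 1)) ≤ π := by
    rw [← corrKernel_neg (lam m - lam (m + 1)), neg_sub]
    have hg := hgap (m - 1)
    rw [show m - 1 + 2 = m + 1 by ring] at hg
    exact corrKernel_add_le (by linarith [hmono (sub_one_lt m)]) (by linarith [hmono (lt_add_one m)])
      (by linarith)
  calc ∑ n ∈ s.erase m, corrKernel (lam m - lam n)
      ≤ ∑ n ∈ s.erase m ∪ {m - 1, m + 1}, corrKernel (lam m - lam n) :=
        Finset.sum_le_sum_of_subset_of_nonneg Finset.subset_union_left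
          fun _ _ _ => corrKernel_nonneg _
    _ = ∑ n ∈ {m - 1, m + 1}, corrKernel (lam m - lam n) := by
        refine (Finset.sum_subset Finset.subset_union_right fun n hn hpair => ?_).symm
        have hn' := (Finset.mem_union.mp hn).resolve_right hpair
        exact hfar n (Finset.ne_of_mem_erase hn') hpair
    _ = corrKernel (lam m - lam (m - 1)) + corrKernel (lam m - lam (m + 1)) :=
        Finset.sum_pair (by omega)
    _ ≤ π := hneighbours

theorem stmt17 (lam : ℤ → ℝ) (hmono : StrictMono lam)
    (hgap : ∀ n : ℤ, Real.pi ≤ lam (n + 2) - lam n)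
    (a : ℤ → ℂ) (ha : (Function.support a).Finite) :
    ∫ x : ℝ, ‖∑ᶠ n : ℤ, a n * (HpowDeriv 2 (x + lam n) : ℂ)‖ ^ 2 ≤
      4 * ∫ x : ℝ, ‖∑ᶠ n : ℤ, a n * (Hpow 2 (x + lam n) : ℂ)‖ ^ 2 := by
  simp only [finsum_mul_ofReal_eq_sum_smul ha]
  rw [integral_norm_sq_sum_smul_comp_add continuous_hpowDeriv_two
      (hasCompactSupport_of_support_subset_Ioo support_hpowDeriv_two_subset),
    integral_norm_sq_sum_smul_comp_add continuous_hpow_two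
      (hasCompactSupport_of_support_subset_Ioo support_hpow_two_subset)]
  have hpos := sum_sum_inner_mul_nonneg_of_diagDominant ha.toFinset
    (fun m n => corrKernel (lam m - lam n))
    (fun m n => by rw [← corrKernel_neg, neg_sub]) (fun m n => corrKernel_nonneg _)
    (fun m _ => by rw [sub_self, corrKernel_zero]; exact sum_erase_corrKernel_le hmono hgap _ m) a
  simp only [corrKernel, mul_sub, Finset.sum_sub_distrib, mul_left_comm _ (4 : ℝ),
    ← Finset.mul_sum] at hpos
  linarith
end
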